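/- arXiv:2207.12216 — 2 statements merged into one kernel-verified Lean document; each statement's English description precedes it below -/
import Mathlib

section
/- S^2 is an algebra under pointwise multiplication: if f, g ∈ S^2 then fg ∈ S^2, with ‖fg‖_{S^2} ≤ C ‖f‖_{S^2} ‖g‖_{S^2} for an absolute constant C (one may take C = (1 + 4π^2/3)^{1/2}). -/
open Metric Filter

noncomputable def taylorCoeff (f : ℂ → ℂ) (n : ℕ) : ℂ :=
  iteratedDeriv n f 0 / n.factorial

/-- Membership in `S²`: `f` is analytic on the open unit disk, equals its Taylor
series there, and its coefficients satisfy `Σ n² |a n|² < ∞`. -/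
def MemS2 (f : ℂ → ℂ) : Prop :=
  AnalyticOn ℂ f (ball (0:ℂ) 1) ∧
  (∀ z ∈ ball (0:ℂ) 1, HasSum (fun n : ℕ => taylorCoeff f n * z ^ n) (f z)) ∧
  Summable (fun n : ℕ => ((n : ℝ))^2 * ‖taylorCoeff f n‖^2)

/-- The square of the `S²` norm: `|a₀|² + Σ_{n≥1} n² |aₙ|²`. -/
noncomputable def s2NormSq (f : ℂ → ℂ) : ℝ :=
  ‖taylorCoeff f 0‖^2 + ∑' n : ℕ, ((n : ℝ) + 1)^2 * ‖taylorCoeff f (n+1)‖^2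

noncomputable def s2Norm (f : ℂ → ℂ) : ℝ := Real.sqrt (s2NormSq f)

/-- The square of the `H²` norm, in terms of Taylor coefficients. -/
noncomputable def h2NormSq (f : ℂ → ℂ) : ℝ := ∑' n : ℕ, ‖taylorCoeff f n‖^2

noncomputable def h2Norm (f : ℂ → ℂ) : ℝ := Real.sqrt (h2NormSq f)

/-- An operator on functions is bounded on `S²`. -/
def BoundedOpS2 (T : (ℂ → ℂ) → (ℂ → ℂ)) : Prop :=
  (∀ f, MemS2 f → MemS2 (T f)) ∧
  ∃ C : ℝ, ∀ f, MemS2 f → s2Norm (T f) ≤ C * s2Norm f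

/-- The operator norm of an operator on `S²`. -/
noncomputable def opNormS2 (T : (ℂ → ℂ) → (ℂ → ℂ)) : ℝ :=
  sInf {C : ℝ | 0 ≤ C ∧ ∀ f, MemS2 f → s2Norm (T f) ≤ C * s2Norm f}

/-- An (analytic) automorphism of the unit disk. -/
def IsDiskAut (φ : ℂ → ℂ) : Prop :=
  AnalyticOn ℂ φ (ball (0:ℂ) 1) ∧ Set.BijOn φ (ball (0:ℂ) 1) (ball (0:ℂ) 1)

/-!
Write `a`, `b` for the Taylor coefficients of `f`, `g`; those of `fg` are the Cauchy product
`c n = ∑_{k+l=n} a k * b l`. Since `n = k + l`, `n |c n|` is bounded by the convolutions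
`(k |a k|) ⋆ |b|` and `|a| ⋆ (l |b l|)`, and Young's inequality `‖u ⋆ v‖₂ ≤ ‖u‖₂ ‖v‖₁` bounds
these in `ℓ²`. Cauchy–Schwarz against `1/n` gives `‖a‖₁² ≤ (1 + π²/6) ‖f‖²_{S²}`, and the
constant `1 + 4 (1 + π²/6)` comes out below `1 + 4π²/3` because `π² ≥ 6`.
-/

open Finset Real

theorem summable_mul_and_sq_tsum_mul_le {ι : Type*} {u v : ι → ℝ} (hu : ∀ i, 0 ≤ u i)
    (hv : ∀ i, 0 ≤ v i) (hu2 : Summable fun i => u i ^ 2) (hv2 : Summable fun i => v i ^ 2) :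
    Summable (fun i => u i * v i) ∧
      (∑' i, u i * v i) ^ 2 ≤ (∑' i, u i ^ 2) * ∑' i, v i ^ 2 := by
  simp only [← rpow_two] at hu2 hv2 ⊢
  refine ⟨summable_mul_of_Lp_Lq_of_nonneg .two_two hu hv hu2 hv2, ?_⟩
  have hU : 0 ≤ ∑' i, u i ^ (2 : ℝ) := tsum_nonneg fun i => rpow_nonneg (hu i) _
  have hV : 0 ≤ ∑' i, v i ^ (2 : ℝ) := tsum_nonneg fun i => rpow_nonneg (hv i) _
  calc (∑' i, u i * v i) ^ (2 : ℝ)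
      ≤ ((∑' i, u i ^ (2 : ℝ)) ^ (1 / 2 : ℝ) * (∑' i, v i ^ (2 : ℝ)) ^ (1 / 2 : ℝ)) ^ (2 : ℝ) := by
        gcongr
        · exact tsum_nonneg fun i => mul_nonneg (hu i) (hv i)
        · exact inner_le_Lp_mul_Lq_tsum_of_nonneg .two_two hu hv hu2 hv2
    _ = (∑' i, u i ^ (2 : ℝ)) * ∑' i, v i ^ (2 : ℝ) := by
        rw [mul_rpow (rpow_nonneg hU _) (rpow_nonneg hV _), ← rpow_mul hU, ← rpow_mul hV]
        norm_num

theorem summable_and_sq_tsum_le_of_summable_natCast_sq_mul_sq {x : ℕ → ℝ} (hx : ∀ n, 0 ≤ x n)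
    (h : Summable fun n : ℕ => (n : ℝ) ^ 2 * x n ^ 2) :
    Summable x ∧
      (∑' n, x n) ^ 2 ≤ (1 + π ^ 2 / 6) * (x 0 ^ 2 + ∑' n : ℕ, (n : ℝ) ^ 2 * x n ^ 2) := by
  have hzeta : HasSum (fun n : ℕ => (1 / ((n : ℝ) + 1)) ^ 2) (π ^ 2 / 6) := by
    simpa [div_pow] using (hasSum_nat_add_iff' 1).2 hasSum_zeta_two
  have hshift : Summable fun n : ℕ => (((n : ℝ) + 1) * x (n + 1)) ^ 2 := by
    simpa [mul_pow] using (summable_nat_add_iff 1).2 h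
  obtain ⟨hsum, hCS⟩ := summable_mul_and_sq_tsum_mul_le (fun n => by positivity)
    (fun n => mul_nonneg (by positivity) (hx _)) hzeta.summable hshift
  have hterm : ∀ n : ℕ, 1 / ((n : ℝ) + 1) * (((n : ℝ) + 1) * x (n + 1)) = x (n + 1) :=
    fun n => by field_simp
  simp only [hterm, hzeta.tsum_eq, mul_pow] at hsum hCS
  have hx1 : Summable x := (summable_nat_add_iff 1).1 hsum
  refine ⟨hx1, ?_⟩
  rw [hx1.tsum_eq_zero_add, h.tsum_eq_zero_add]
  push_cast
  simp only [ne_eq, OfNat.ofNat_ne_zero, not_false_eq_true, zero_pow, zero_mul, zero_add]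
  set ζ := π ^ 2 / 6
  set T := ∑' n, x (n + 1)
  have hζ : 0 < ζ := by positivity
  -- Cauchy–Schwarz in `ℝ²` for `(1, √ζ) · (x 0, T / √ζ)`.
  nlinarith [mul_le_mul_of_nonneg_left hCS (by positivity : (0 : ℝ) ≤ 1 + ζ),
    sq_nonneg (ζ * x 0 - T)]

theorem sum_antidiagonal_le_tsum {v : ℕ → ℝ} (hv : ∀ n, 0 ≤ v n) (hv1 : Summable v) (n : ℕ) :
    ∑ kl ∈ antidiagonal n, v kl.2 ≤ ∑' n, v n := by
  rw [← Nat.sum_antidiagonal_swap]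
  simpa only [Prod.snd_swap, Nat.sum_antidiagonal_eq_sum_range_succ fun k _ => v k]
    using hv1.sum_le_tsum _ fun k _ => hv k

theorem summable_and_tsum_sq_sum_antidiagonal_mul_le {u v : ℕ → ℝ}
    (hv : ∀ n, 0 ≤ v n) (hu2 : Summable fun n => u n ^ 2) (hv1 : Summable v) :
    (Summable fun n => (∑ kl ∈ antidiagonal n, u kl.1 * v kl.2) ^ 2) ∧
      ∑' n, (∑ kl ∈ antidiagonal n, u kl.1 * v kl.2) ^ 2 ≤ (∑' n, u n ^ 2) * (∑' n, v n) ^ 2 := by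
  have hconv : HasSum (fun n => ∑ kl ∈ antidiagonal n, u kl.1 ^ 2 * v kl.2)
      ((∑' n, u n ^ 2) * ∑' n, v n) := by
    have h2 := hu2.norm
    have h1 := hv1.norm
    rw [tsum_mul_tsum_eq_tsum_sum_antidiagonal_of_summable_norm h2 h1]
    exact (summable_norm_sum_mul_antidiagonal_of_summable_norm h2 h1).of_norm.hasSum
  -- Cauchy–Schwarz with the weights `v l`, splitting `u k * v l = (u k √(v l)) * √(v l)`.
  have hpoint : ∀ n, (∑ kl ∈ antidiagonal n, u kl.1 * v kl.2) ^ 2 ≤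
      (∑' n, v n) * ∑ kl ∈ antidiagonal n, u kl.1 ^ 2 * v kl.2 := fun n => by
    calc (∑ kl ∈ antidiagonal n, u kl.1 * v kl.2) ^ 2
        ≤ (∑ kl ∈ antidiagonal n, u kl.1 ^ 2 * v kl.2) * ∑ kl ∈ antidiagonal n, v kl.2 :=
          sum_sq_le_sum_mul_sum_of_sq_le_mul _ (fun kl _ => mul_nonneg (sq_nonneg _) (hv _))
            (fun kl _ => hv _) fun kl _ => le_of_eq (by ring)
      _ ≤ (∑ kl ∈ antidiagonal n, u kl.1 ^ 2 * v kl.2) * ∑' n, v n := by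
          gcongr
          · exact sum_nonneg fun kl _ => mul_nonneg (sq_nonneg _) (hv _)
          · exact sum_antidiagonal_le_tsum hv hv1 n
      _ = _ := mul_comm _ _
  have hmaj := hconv.summable.mul_left (∑' n, v n)
  have hsum := hmaj.of_nonneg_of_le (fun n => sq_nonneg _) hpoint
  refine ⟨hsum, ?_⟩
  calc ∑' n, (∑ kl ∈ antidiagonal n, u kl.1 * v kl.2) ^ 2
      ≤ ∑' n, (∑' n, v n) * ∑ kl ∈ antidiagonal n, u kl.1 ^ 2 * v kl.2 :=
        hsum.tsum_le_tsum hpoint hmaj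
    _ = (∑' n, u n ^ 2) * (∑' n, v n) ^ 2 := by rw [tsum_mul_left, hconv.tsum_eq]; ring

theorem natCast_mul_norm_sum_antidiagonal_le (a b : ℕ → ℂ) (n : ℕ) :
    n * ‖∑ kl ∈ antidiagonal n, a kl.1 * b kl.2‖ ≤
      ∑ kl ∈ antidiagonal n, kl.1 * ‖a kl.1‖ * ‖b kl.2‖ +
        ∑ kl ∈ antidiagonal n, kl.1 * ‖b kl.1‖ * ‖a kl.2‖ := by
  rw [← Nat.sum_antidiagonal_swap (f := fun kl => (kl.1 : ℝ) * ‖b kl.1‖ * ‖a kl.2‖),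
    ← sum_add_distrib, ← Complex.norm_natCast, ← norm_mul, mul_sum]
  refine (norm_sum_le _ _).trans (sum_le_sum fun kl hkl => ?_)
  rw [← HasAntidiagonal.mem_antidiagonal.1 hkl, norm_mul, norm_mul, Complex.norm_natCast]
  simp only [Prod.fst_swap, Prod.snd_swap]
  push_cast
  exact le_of_eq (by ring)

theorem summable_and_tsum_sq_sum_antidiagonal_natCast_mul_norm_le {a b : ℕ → ℂ}
    (ha : Summable fun n : ℕ => (n : ℝ) ^ 2 * ‖a n‖ ^ 2)
    (hb : Summable fun n : ℕ => (n : ℝ) ^ 2 * ‖b n‖ ^ 2) :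
    (Summable fun n => (∑ kl ∈ antidiagonal n, kl.1 * ‖a kl.1‖ * ‖b kl.2‖) ^ 2) ∧
      ∑' n, (∑ kl ∈ antidiagonal n, kl.1 * ‖a kl.1‖ * ‖b kl.2‖) ^ 2 ≤
        (∑' n : ℕ, (n : ℝ) ^ 2 * ‖a n‖ ^ 2) * (∑' n, ‖b n‖) ^ 2 := by
  simpa only [mul_pow] using summable_and_tsum_sq_sum_antidiagonal_mul_le
    (u := fun n => n * ‖a n‖) (fun n => norm_nonneg _) (by simpa only [mul_pow] using ha)
    (summable_and_sq_tsum_le_of_summable_natCast_sq_mul_sq (fun n => norm_nonneg _) hb).1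

theorem summable_and_tsum_natCast_sq_mul_norm_sq_sum_antidiagonal_le {a b : ℕ → ℂ}
    (ha : Summable fun n : ℕ => (n : ℝ) ^ 2 * ‖a n‖ ^ 2)
    (hb : Summable fun n : ℕ => (n : ℝ) ^ 2 * ‖b n‖ ^ 2) :
    (Summable fun n : ℕ => (n : ℝ) ^ 2 * ‖∑ kl ∈ antidiagonal n, a kl.1 * b kl.2‖ ^ 2) ∧
      ∑' n : ℕ, (n : ℝ) ^ 2 * ‖∑ kl ∈ antidiagonal n, a kl.1 * b kl.2‖ ^ 2 ≤
        2 * (∑' n : ℕ, (n : ℝ) ^ 2 * ‖a n‖ ^ 2) * (∑' n, ‖b n‖) ^ 2 +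
          2 * (∑' n : ℕ, (n : ℝ) ^ 2 * ‖b n‖ ^ 2) * (∑' n, ‖a n‖) ^ 2 := by
  obtain ⟨hsum₁, hle₁⟩ := summable_and_tsum_sq_sum_antidiagonal_natCast_mul_norm_le ha hb
  obtain ⟨hsum₂, hle₂⟩ := summable_and_tsum_sq_sum_antidiagonal_natCast_mul_norm_le hb ha
  have hpoint : ∀ n : ℕ, (n : ℝ) ^ 2 * ‖∑ kl ∈ antidiagonal n, a kl.1 * b kl.2‖ ^ 2 ≤
      2 * (∑ kl ∈ antidiagonal n, kl.1 * ‖a kl.1‖ * ‖b kl.2‖) ^ 2 +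
        2 * (∑ kl ∈ antidiagonal n, kl.1 * ‖b kl.1‖ * ‖a kl.2‖) ^ 2 := fun n => by
    rw [← mul_pow]
    refine (pow_le_pow_left₀ (by positivity)
      (natCast_mul_norm_sum_antidiagonal_le a b n) 2).trans ?_
    nlinarith [sq_nonneg (∑ kl ∈ antidiagonal n, kl.1 * ‖a kl.1‖ * ‖b kl.2‖ -
      ∑ kl ∈ antidiagonal n, kl.1 * ‖b kl.1‖ * ‖a kl.2‖)]
  have hmaj := (hsum₁.mul_left 2).add (hsum₂.mul_left 2)
  have hsum := hmaj.of_nonneg_of_le (fun n => by positivity) hpoint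
  refine ⟨hsum, ?_⟩
  calc _ ≤ _ := hsum.tsum_le_tsum hpoint hmaj
    _ = 2 * ∑' n, (∑ kl ∈ antidiagonal n, kl.1 * ‖a kl.1‖ * ‖b kl.2‖) ^ 2 +
          2 * ∑' n, (∑ kl ∈ antidiagonal n, kl.1 * ‖b kl.1‖ * ‖a kl.2‖) ^ 2 := by
        rw [(hsum₁.mul_left 2).tsum_add (hsum₂.mul_left 2), tsum_mul_left, tsum_mul_left]
    _ ≤ _ := by linarith

theorem taylorCoeff_mul {f g : ℂ → ℂ} {n : ℕ} (hf : ContDiffAt ℂ n f 0)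
    (hg : ContDiffAt ℂ n g 0) :
    taylorCoeff (fun z => f z * g z) n =
      ∑ kl ∈ antidiagonal n, taylorCoeff f kl.1 * taylorCoeff g kl.2 := by
  rw [taylorCoeff, iteratedDeriv_fun_mul hf hg, sum_div,
    ← Nat.sum_antidiagonal_eq_sum_range_succ
      (fun k l => (n.choose k : ℂ) * iteratedDeriv k f 0 * iteratedDeriv l g 0 / n.factorial)]
  refine sum_congr rfl fun kl hkl => ?_
  obtain rfl := HasAntidiagonal.mem_antidiagonal.1 hkl
  have hchoose : ((kl.1 + kl.2).choose kl.2 : ℂ) ≠ 0 :=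
    Nat.cast_ne_zero.2 (Nat.choose_pos (by omega)).ne'
  rw [taylorCoeff, taylorCoeff, Nat.choose_symm_add, ← Nat.add_choose_mul_factorial_mul_factorial]
  push_cast
  field_simp

theorem hasSum_sum_antidiagonal_mul_pow {a b : ℕ → ℂ} {z A B : ℂ}
    (ha : Summable fun n => ‖a n‖) (hb : Summable fun n => ‖b n‖) (hz : ‖z‖ ≤ 1)
    (hA : HasSum (fun n => a n * z ^ n) A) (hB : HasSum (fun n => b n * z ^ n) B) :
    HasSum (fun n => (∑ kl ∈ antidiagonal n, a kl.1 * b kl.2) * z ^ n) (A * B) := by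
  have hdom : ∀ c : ℕ → ℂ, Summable (fun n => ‖c n‖) → Summable fun n => ‖c n * z ^ n‖ :=
    fun c hc => hc.of_nonneg_of_le (fun n => norm_nonneg _) fun n => by
      rw [norm_mul, norm_pow]
      exact mul_le_of_le_one_right (norm_nonneg _) (pow_le_one₀ (norm_nonneg z) hz)
  have hAz := hdom a ha
  have hBz := hdom b hb
  rw [← hA.tsum_eq, ← hB.tsum_eq, tsum_mul_tsum_eq_tsum_sum_antidiagonal_of_summable_norm hAz hBz]
  refine (summable_norm_sum_mul_antidiagonal_of_summable_norm hAz hBz).of_norm.hasSum.congr_fun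
    fun n => ?_
  rw [sum_mul]
  refine sum_congr rfl fun kl hkl => ?_
  rw [← HasAntidiagonal.mem_antidiagonal.1 hkl, pow_add]
  ring

theorem s2NormSq_nonneg (f : ℂ → ℂ) : 0 ≤ s2NormSq f :=
  add_nonneg (sq_nonneg _) (tsum_nonneg fun _ => by positivity)

theorem s2NormSq_eq_add_tsum {f : ℂ → ℂ}
    (h : Summable fun n : ℕ => (n : ℝ) ^ 2 * ‖taylorCoeff f n‖ ^ 2) :
    s2NormSq f = ‖taylorCoeff f 0‖ ^ 2 + ∑' n : ℕ, (n : ℝ) ^ 2 * ‖taylorCoeff f n‖ ^ 2 := by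
  rw [s2NormSq, h.tsum_eq_zero_add]
  push_cast
  simp

namespace MemS2

variable {f g : ℂ → ℂ}

theorem summable_norm_taylorCoeff (hf : MemS2 f) : Summable fun n => ‖taylorCoeff f n‖ :=
  (summable_and_sq_tsum_le_of_summable_natCast_sq_mul_sq (fun _ => norm_nonneg _) hf.2.2).1

theorem sq_tsum_norm_taylorCoeff_le (hf : MemS2 f) :
    (∑' n, ‖taylorCoeff f n‖) ^ 2 ≤ (1 + π ^ 2 / 6) * s2NormSq f := by
  rw [s2NormSq_eq_add_tsum hf.2.2]
  exact (summable_and_sq_tsum_le_of_summable_natCast_sq_mul_sq (fun _ => norm_nonneg _) hf.2.2).2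

theorem taylorCoeff_mul (hf : MemS2 f) (hg : MemS2 g) (n : ℕ) :
    taylorCoeff (fun z => f z * g z) n =
      ∑ kl ∈ antidiagonal n, taylorCoeff f kl.1 * taylorCoeff g kl.2 :=
  _root_.taylorCoeff_mul (hf.1.analyticAt (ball_mem_nhds 0 one_pos)).contDiffAt
    (hg.1.analyticAt (ball_mem_nhds 0 one_pos)).contDiffAt

theorem mul (hf : MemS2 f) (hg : MemS2 g) : MemS2 fun z => f z * g z := by
  refine ⟨hf.1.mul hg.1, fun z hz => ?_, ?_⟩
  · simpa only [hf.taylorCoeff_mul hg] using hasSum_sum_antidiagonal_mul_pow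
      hf.summable_norm_taylorCoeff hg.summable_norm_taylorCoeff (mem_ball_zero_iff.1 hz).le
      (hf.2.1 z hz) (hg.2.1 z hz)
  · simpa only [hf.taylorCoeff_mul hg] using
      (summable_and_tsum_natCast_sq_mul_norm_sq_sum_antidiagonal_le hf.2.2 hg.2.2).1

theorem s2NormSq_mul_le (hf : MemS2 f) (hg : MemS2 g) :
    s2NormSq (fun z => f z * g z) ≤ (1 + 4 * π ^ 2 / 3) * (s2NormSq f * s2NormSq g) := by
  have hc := (summable_and_tsum_natCast_sq_mul_norm_sq_sum_antidiagonal_le hf.2.2 hg.2.2).2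
  have hLf := hf.sq_tsum_norm_taylorCoeff_le
  have hLg := hg.sq_tsum_norm_taylorCoeff_le
  rw [s2NormSq_eq_add_tsum (hf.mul hg).2.2]
  simp only [hf.taylorCoeff_mul hg, Nat.antidiagonal_zero, sum_singleton, norm_mul, mul_pow]
  rw [s2NormSq_eq_add_tsum hf.2.2] at hLf ⊢
  rw [s2NormSq_eq_add_tsum hg.2.2] at hLg ⊢
  set A := ∑' n : ℕ, (n : ℝ) ^ 2 * ‖taylorCoeff f n‖ ^ 2
  set B := ∑' n : ℕ, (n : ℝ) ^ 2 * ‖taylorCoeff g n‖ ^ 2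
  set a₀ := ‖taylorCoeff f 0‖ ^ 2
  set b₀ := ‖taylorCoeff g 0‖ ^ 2
  have hA : 0 ≤ A := tsum_nonneg fun _ => by positivity
  have hB : 0 ≤ B := tsum_nonneg fun _ => by positivity
  have ha₀ : 0 ≤ a₀ := by positivity
  have hb₀ : 0 ≤ b₀ := by positivity
  have hπ : 6 ≤ π ^ 2 := by nlinarith [pi_gt_three]
  calc _ ≤ a₀ * b₀ +
        (2 * A * ((1 + π ^ 2 / 6) * (b₀ + B)) + 2 * B * ((1 + π ^ 2 / 6) * (a₀ + A))) := by
        gcongr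
        exact hc.trans (by gcongr)
    _ ≤ (1 + 4 * π ^ 2 / 3) * ((a₀ + A) * (b₀ + B)) := by
        nlinarith [mul_nonneg hA hB, mul_nonneg ha₀ hB, mul_nonneg hA hb₀, mul_nonneg ha₀ hb₀]

end MemS2

theorem s2_is_algebra (f g : ℂ → ℂ) (hf : MemS2 f) (hg : MemS2 g) :
    MemS2 (fun z => f z * g z) ∧
      s2Norm (fun z => f z * g z) ≤
        Real.sqrt (1 + 4 * Real.pi^2 / 3) * (s2Norm f * s2Norm g) := by
  refine ⟨hf.mul hg, ?_⟩
  rw [s2Norm, s2Norm, s2Norm, ← sqrt_mul (s2NormSq_nonneg f), ← sqrt_mul (by positivity)]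
  exact sqrt_le_sqrt (hf.s2NormSq_mul_le hg)
end

section
/- There are no isometric zero-divisors in S^2: there is no nonconstant g ∈ S^2 vanishing on a nonempty zero-set {z_k} ⊂ D such that f/g ∈ S^2 and ‖f/g‖_{S^2} = ‖f‖_{S^2} for every f ∈ S^2 vanishing on {z_k}. -/
open Metric Filter

/-! Dividing `g` and `z g` by an isometric divisor `g` gives `1` and `z`, both of `S²` norm one,
so `‖g‖ = ‖z g‖`. But multiplying by `z` moves the coefficient `aₙ` from weight `n²` to weight
`(n + 1)²`, so `‖z g‖² - ‖g‖² = Σ_{n ≥ 1} (2n + 1) |aₙ|²`, which is positive unless `g` is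
constant. -/

open Topology

def IsIsometricDivisor (g : ℂ → ℂ) : Prop :=
  ∀ f : ℂ → ℂ, MemS2 f → (∀ z ∈ ball (0:ℂ) 1, g z = 0 → f z = 0) →
    ∃ h : ℂ → ℂ, MemS2 h ∧ (∀ z ∈ ball (0:ℂ) 1, f z = g z * h z) ∧ s2Norm h = s2Norm f

lemma eball_zero_one_eq_ball : eball (0:ℂ) 1 = ball (0:ℂ) 1 := by
  rw [← ENNReal.coe_one, eball_coe, NNReal.coe_one]

lemma hasFPowerSeriesOnBall_ofScalars_of_hasSum {f : ℂ → ℂ} {c : ℕ → ℂ}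
    (hc : ∀ z ∈ ball (0:ℂ) 1, HasSum (fun n => c n * z ^ n) (f z)) :
    HasFPowerSeriesOnBall f (FormalMultilinearSeries.ofScalars ℂ c) 0 1 := by
  refine ⟨ENNReal.le_of_forall_nnreal_lt fun r hr => ?_, one_pos, fun {y} hy => ?_⟩
  · have hr_mem : ((r : ℝ) : ℂ) ∈ ball (0:ℂ) 1 := by
      simpa [abs_of_nonneg r.coe_nonneg] using hr
    refine FormalMultilinearSeries.le_radius_of_tendsto _ (l := 0) ?_
    have h := (hc _ hr_mem).summable.tendsto_atTop_zero.norm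
    rw [norm_zero] at h
    refine h.congr fun n => ?_
    rw [norm_mul, norm_pow, Complex.norm_real, Real.norm_of_nonneg r.coe_nonneg,
      FormalMultilinearSeries.ofScalars_norm]
  · simpa [FormalMultilinearSeries.ofScalars_apply_eq, mul_comm] using
      hc y (eball_zero_one_eq_ball ▸ hy)

lemma taylorCoeff_eq_of_hasSum {f : ℂ → ℂ} {c : ℕ → ℂ}
    (hc : ∀ z ∈ ball (0:ℂ) 1, HasSum (fun n => c n * z ^ n) (f z)) (n : ℕ) :
    taylorCoeff f n = c n := by
  have h := (hasFPowerSeriesOnBall_ofScalars_of_hasSum hc).factorial_smul (1:ℂ) n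
  simp only [FormalMultilinearSeries.ofScalars_apply_eq, one_pow, smul_eq_mul, mul_one] at h
  rw [taylorCoeff, iteratedDeriv_eq_iteratedFDeriv, ← h, nsmul_eq_mul]
  field_simp [Nat.cast_ne_zero.mpr n.factorial_ne_zero]

lemma memS2_of_hasSum {f : ℂ → ℂ} {c : ℕ → ℂ}
    (hc : ∀ z ∈ ball (0:ℂ) 1, HasSum (fun n => c n * z ^ n) (f z))
    (hs : Summable fun n : ℕ => (n : ℝ) ^ 2 * ‖c n‖ ^ 2) :
    MemS2 f := by
  have hcoeff := taylorCoeff_eq_of_hasSum hc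
  refine ⟨?_, fun z hz => by simpa only [hcoeff] using hc z hz, by simpa only [hcoeff] using hs⟩
  have h := (hasFPowerSeriesOnBall_ofScalars_of_hasSum hc).analyticOnNhd
  rw [eball_zero_one_eq_ball] at h
  exact h.analyticOn

lemma MemS2.analyticOnNhd {f : ℂ → ℂ} (hf : MemS2 f) : AnalyticOnNhd ℂ f (ball (0:ℂ) 1) :=
  isOpen_ball.analyticOn_iff_analyticOnNhd.1 hf.1

lemma MemS2.taylorCoeff_eq_of_eqOn {f g : ℂ → ℂ} (hg : MemS2 g)
    (hfg : ∀ z ∈ ball (0:ℂ) 1, f z = g z) : taylorCoeff f = taylorCoeff g :=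
  funext <| taylorCoeff_eq_of_hasSum fun z hz => hfg z hz ▸ hg.2.1 z hz

lemma MemS2.s2Norm_eq_of_eqOn {f g : ℂ → ℂ} (hg : MemS2 g)
    (hfg : ∀ z ∈ ball (0:ℂ) 1, f z = g z) : s2Norm f = s2Norm g := by
  simp only [s2Norm, s2NormSq, hg.taylorCoeff_eq_of_eqOn hfg]

lemma MemS2.eqOn_const_of_taylorCoeff_succ_eq_zero {f : ℂ → ℂ} (hf : MemS2 f)
    (h : ∀ n, taylorCoeff f (n + 1) = 0) : ∀ z ∈ ball (0:ℂ) 1, f z = taylorCoeff f 0 := by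
  intro z hz
  refine (hf.2.1 z hz).unique ?_
  convert hasSum_ite_eq 0 (taylorCoeff f 0) using 2 with n
  cases n <;> simp [h]

lemma eqOn_of_mul_eqOn_mul {U : Set ℂ} (hU : IsOpen U) (hU' : IsPreconnected U) {g h q : ℂ → ℂ}
    (hg : AnalyticOnNhd ℂ g U) (hh : AnalyticOnNhd ℂ h U) (hq : AnalyticOnNhd ℂ q U)
    (hg0 : ∃ z ∈ U, g z ≠ 0) (hghq : ∀ z ∈ U, g z * h z = g z * q z) :
    ∀ z ∈ U, h z = q z := by
  obtain ⟨z₀, hz₀, hgz₀⟩ := hg0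
  have h_eq_near : h =ᶠ[𝓝 z₀] q := by
    filter_upwards [(hg z₀ hz₀).continuousAt.eventually_ne hgz₀, hU.eventually_mem hz₀]
      with z hgz hz
    exact mul_left_cancel₀ hgz (hghq z hz)
  exact fun z hz => hh.eqOn_of_preconnected_of_eventuallyEq hq hU' hz₀ h_eq_near hz

lemma hasSum_monomial (k : ℕ) (z : ℂ) :
    HasSum (fun n => (if n = k then 1 else 0) * z ^ n) (z ^ k) := by
  convert hasSum_ite_eq k (z ^ k) using 2 with n
  split_ifs with hn <;> simp [hn]

lemma taylorCoeff_pow (k : ℕ) : taylorCoeff (fun z => z ^ k) = fun n => if n = k then 1 else 0 :=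
  funext <| taylorCoeff_eq_of_hasSum fun z _ => hasSum_monomial k z

lemma memS2_pow (k : ℕ) : MemS2 fun z => z ^ k := by
  refine memS2_of_hasSum (fun z _ => hasSum_monomial k z) ?_
  convert (hasSum_ite_eq k ((k : ℝ) ^ 2)).summable using 2 with n
  split_ifs with hn <;> simp [hn]

lemma s2Norm_pow_zero : s2Norm (fun z => z ^ 0) = 1 := by
  rw [s2Norm, s2NormSq, taylorCoeff_pow]
  simp

lemma s2Norm_pow_one : s2Norm (fun z => z ^ 1) = 1 := by
  have h : (fun n : ℕ => ((n : ℝ) + 1) ^ 2 * ‖if n + 1 = 1 then (1:ℂ) else 0‖ ^ 2) =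
      fun n => if n = 0 then 1 else 0 := funext fun n => by cases n <;> simp
  rw [s2Norm, s2NormSq, taylorCoeff_pow, h, tsum_ite_eq]
  simp

section MulId

variable {g : ℂ → ℂ}

lemma MemS2.summable_tail (hg : MemS2 g) :
    Summable fun n : ℕ => ((n : ℝ) + 1) ^ 2 * ‖taylorCoeff g (n + 1)‖ ^ 2 :=
  ((summable_nat_add_iff 1).2 hg.2.2).congr fun n => by push_cast; ring

lemma MemS2.summable_tail_add_two (hg : MemS2 g) :
    Summable fun n : ℕ => ((n : ℝ) + 2) ^ 2 * ‖taylorCoeff g (n + 1)‖ ^ 2 := by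
  refine (hg.summable_tail.mul_left 4).of_nonneg_of_le (fun n => by positivity) fun n => ?_
  rw [← mul_assoc]
  gcongr
  nlinarith [(n.cast_nonneg : (0:ℝ) ≤ n)]

lemma MemS2.summable_add_one_sq (hg : MemS2 g) :
    Summable fun n : ℕ => ((n : ℝ) + 1) ^ 2 * ‖taylorCoeff g n‖ ^ 2 :=
  (summable_nat_add_iff 1).1 <| hg.summable_tail_add_two.congr fun n => by push_cast; ring

lemma MemS2.hasSum_mul_id (hg : MemS2 g) {z : ℂ} (hz : z ∈ ball (0:ℂ) 1) :
    HasSum (fun n => (if n = 0 then 0 else taylorCoeff g (n - 1)) * z ^ n) (z * g z) := by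
  have h := (hasSum_nat_add_iff
    (f := fun n => (if n = 0 then 0 else taylorCoeff g (n - 1)) * z ^ n) 1).1 <|
    ((hg.2.1 z hz).mul_left z).congr_fun fun n => by simp [pow_succ]; ring
  simpa using h

lemma MemS2.taylorCoeff_mul_id_zero (hg : MemS2 g) : taylorCoeff (fun z => z * g z) 0 = 0 :=
  taylorCoeff_eq_of_hasSum (fun _ hz => hg.hasSum_mul_id hz) 0

lemma MemS2.taylorCoeff_mul_id_succ (hg : MemS2 g) (n : ℕ) :
    taylorCoeff (fun z => z * g z) (n + 1) = taylorCoeff g n :=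
  taylorCoeff_eq_of_hasSum (fun _ hz => hg.hasSum_mul_id hz) (n + 1)

lemma MemS2.mul_id (hg : MemS2 g) : MemS2 fun z => z * g z :=
  memS2_of_hasSum (fun _ hz => hg.hasSum_mul_id hz) <| (summable_nat_add_iff 1).1 <|
    hg.summable_add_one_sq.congr fun n => by simp

lemma MemS2.s2NormSq_mul_id (hg : MemS2 g) :
    s2NormSq (fun z => z * g z) =
      ‖taylorCoeff g 0‖ ^ 2 + ∑' n : ℕ, ((n : ℝ) + 2) ^ 2 * ‖taylorCoeff g (n + 1)‖ ^ 2 := by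
  simp only [s2NormSq, hg.taylorCoeff_mul_id_zero, hg.taylorCoeff_mul_id_succ,
    hg.summable_add_one_sq.tsum_eq_zero_add, norm_zero, ne_eq, OfNat.ofNat_ne_zero,
    not_false_eq_true, zero_pow, CharP.cast_eq_zero, zero_add, one_pow, one_mul, Nat.cast_add,
    Nat.cast_one, add_right_inj]
  exact tsum_congr fun n => by ring

lemma MemS2.s2Norm_lt_s2Norm_mul_id (hg : MemS2 g)
    (hnc : ¬ ∃ c : ℂ, ∀ z ∈ ball (0:ℂ) 1, g z = c) :
    s2Norm g < s2Norm fun z => z * g z := by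
  obtain ⟨k, hk⟩ : ∃ k, taylorCoeff g (k + 1) ≠ 0 := by
    by_contra! h
    exact hnc ⟨_, hg.eqOn_const_of_taylorCoeff_succ_eq_zero h⟩
  refine Real.sqrt_lt_sqrt (add_nonneg (sq_nonneg _) (tsum_nonneg fun n => by positivity)) ?_
  rw [hg.s2NormSq_mul_id, s2NormSq]
  gcongr
  refine hg.summable_tail.tsum_lt_tsum (i := k) (fun n => by gcongr; linarith) ?_
    hg.summable_tail_add_two
  gcongr
  linarith

end MulId

lemma IsIsometricDivisor.s2Norm_mul {g : ℂ → ℂ} (hdiv : IsIsometricDivisor g) (hg : MemS2 g)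
    (hg0 : ∃ z ∈ ball (0:ℂ) 1, g z ≠ 0) {q : ℂ → ℂ} (hq : MemS2 q)
    (hgq : MemS2 fun z => g z * q z) :
    s2Norm (fun z => g z * q z) = s2Norm q := by
  obtain ⟨h, hh, hfac, hnorm⟩ := hdiv _ hgq fun z _ hz => by rw [hz, zero_mul]
  rw [← hnorm]
  exact hq.s2Norm_eq_of_eqOn <| eqOn_of_mul_eqOn_mul isOpen_ball
    (convex_ball (0:ℂ) 1).isPreconnected hg.analyticOnNhd hh.analyticOnNhd hq.analyticOnNhd hg0
    fun z hz => (hfac z hz).symm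

theorem no_isometric_zero_divisors :
    ¬ ∃ g : ℂ → ℂ, MemS2 g ∧
      (¬ ∃ c : ℂ, ∀ z ∈ ball (0:ℂ) 1, g z = c) ∧
      (∃ z ∈ ball (0:ℂ) 1, g z = 0) ∧
      ∀ f : ℂ → ℂ, MemS2 f → (∀ z ∈ ball (0:ℂ) 1, g z = 0 → f z = 0) →
        ∃ h : ℂ → ℂ, MemS2 h ∧ (∀ z ∈ ball (0:ℂ) 1, f z = g z * h z) ∧
          s2Norm h = s2Norm f := by
  rintro ⟨g, hg, hnc, -, hdiv : IsIsometricDivisor g⟩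
  have hg0 : ∃ z ∈ ball (0:ℂ) 1, g z ≠ 0 := by
    by_contra! h
    exact hnc ⟨0, h⟩
  have hnorm_g : s2Norm g = 1 := by
    have h := hdiv.s2Norm_mul hg hg0 (memS2_pow 0) (by simpa using hg)
    rw [s2Norm_pow_zero] at h
    simpa using h
  have hnorm_zg : s2Norm (fun z => z * g z) = 1 := by
    have h := hdiv.s2Norm_mul hg hg0 (memS2_pow 1) (by simpa [mul_comm] using hg.mul_id)
    rw [s2Norm_pow_one] at h
    simpa [mul_comm] using h
  exact (hg.s2Norm_lt_s2Norm_mul_id hnc).ne (hnorm_g.trans hnorm_zg.symm)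
end
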